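/- arXiv:1308.6223 — 3 statements merged into one kernel-verified Lean document; each statement's English description precedes it below -/
import Mathlib

section
/- Let a, b ∈ Cℓ and set ω := Γ_{{1,…,n}} = Γ_1Γ_2⋯Γ_n. Then the identity ι(v)·b·ι(w) + ι(w)·b·ι(v) = 2·⟨v,w⟩·a holds for all v, w ∈ ℂⁿ if and only if there exist α, γ ∈ ℂ such that b = α·1 + γ·ω and a = −α·1 + (−1)ⁿ·γ·ω. (In particular, for n odd, b is a scalar plus a multiple of the volume monomial and a is determined by b; this is the key computation behind the classification of simple Clifford maps of Cahen–Wallach spaces, where the condition Γ_{(μ}bΓ_{ν)} = g_{μν}a arises from the equivariance of the map.) -/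
noncomputable section

/-- The quadratic form `Q(v) = -∑ v μ ^ 2` on `ℂⁿ`. -/
def Qf (n : ℕ) : QuadraticForm ℂ (Fin n → ℂ) :=
  QuadraticMap.weightedSumSquares ℂ (fun _ : Fin n => (-1 : ℂ))

/-- The Clifford algebra of `Qf n`. -/
abbrev Cl (n : ℕ) := CliffordAlgebra (Qf n)

/-- The canonical embedding `ℂⁿ → Cℓ`. -/
def emb (n : ℕ) : (Fin n → ℂ) →ₗ[ℂ] Cl n := CliffordAlgebra.ι (Qf n)

/-- `Γ_μ = ι(e_μ)`. -/
def Γg (n : ℕ) (μ : Fin n) : Cl n := emb n (Pi.single μ 1)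

/-- `Γ_I = Γ_{i₁} ⋯ Γ_{i_k}` with `i₁ < ⋯ < i_k` the elements of `I`. -/
def ΓI (n : ℕ) (I : Finset (Fin n)) : Cl n :=
  ((I.sort (· ≤ ·)).map (Γg n)).prod

/-- `q_{a,b}(x) = a²x + xb² − 2axb`. -/
def qp {n : ℕ} (a b x : Cl n) : Cl n := a ^ 2 * x + x * b ^ 2 - 2 * a * x * b

/-- `s_{a,b}(x) = ax − xb`. -/
def sp {n : ℕ} (a b x : Cl n) : Cl n := a * x - x * b

/-- `σ_k = (−1)^{k(k+1)/2}`. -/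
def σs (k : ℕ) : ℂ := (-1 : ℂ) ^ (k * (k + 1) / 2)

namespace Stmt12

variable {n : ℕ}

/-- sign `(-1)^{#{i ∈ J : i < μ}}`. -/
def csign (μ : Fin n) (J : Finset (Fin n)) : ℂ := (-1) ^ ((J.filter (· < μ)).card)

lemma csign_mul_self (μ : Fin n) (J : Finset (Fin n)) : csign μ J * csign μ J = 1 := by
  rw [csign, ← pow_add, ← two_mul, pow_mul]; norm_num

lemma csign_erase_self (μ : Fin n) (J : Finset (Fin n)) : csign μ (J.erase μ) = csign μ J := by
  unfold csign
  congr 1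
  rw [Finset.filter_erase]
  congr 1
  apply Finset.erase_eq_of_notMem
  simp

lemma csign_insert_self (μ : Fin n) (J : Finset (Fin n)) : csign μ (insert μ J) = csign μ J := by
  unfold csign
  rw [Finset.filter_insert]
  simp

lemma csign_insert {μ ν : Fin n} (J : Finset (Fin n)) (hν : ν ∉ J) (hne : ν ≠ μ) :
    csign μ (insert ν J) = (if ν < μ then -1 else 1) * csign μ J := by
  unfold csign
  rw [Finset.filter_insert]
  by_cases h : ν < μ
  · rw [if_pos h, if_pos h, Finset.card_insert_of_notMem (by simp [hν]), pow_succ]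
    ring
  · rw [if_neg h, if_neg h, one_mul]

lemma csign_erase {μ ν : Fin n} (J : Finset (Fin n)) (hν : ν ∈ J) (hne : ν ≠ μ) :
    csign μ (J.erase ν) = (if ν < μ then -1 else 1) * csign μ J := by
  have h1 : csign μ (insert ν (J.erase ν)) = (if ν < μ then -1 else 1) * csign μ (J.erase ν) :=
    csign_insert _ (Finset.notMem_erase _ _) hne
  rw [Finset.insert_erase hν] at h1
  rw [h1]
  by_cases h : ν < μ <;> simp [h] <;> ring

/-- The operator `C_μ = e_μ ∧ · − ι_μ` on the Fock space `ℂ^(Finset (Fin n))`. -/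
def Cop1 (μ : Fin n) : (Finset (Fin n) → ℂ) →ₗ[ℂ] (Finset (Fin n) → ℂ) where
  toFun f J := if μ ∈ J then csign μ J * f (J.erase μ) else -(csign μ J * f (insert μ J))
  map_add' f g := by funext J; by_cases h : μ ∈ J <;> simp [h] <;> ring
  map_smul' c f := by funext J; by_cases h : μ ∈ J <;> simp [h] <;> ring

lemma Cop1_apply (μ : Fin n) (f : Finset (Fin n) → ℂ) (J : Finset (Fin n)) :
    Cop1 μ f J = if μ ∈ J then csign μ J * f (J.erase μ) else -(csign μ J * f (insert μ J)) := rfl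

lemma my_erase_comm (s : Finset (Fin n)) (a b : Fin n) :
    (s.erase a).erase b = (s.erase b).erase a := by
  ext x; simp only [Finset.mem_erase]; tauto

lemma my_insert_comm (s : Finset (Fin n)) (a b : Fin n) :
    insert a (insert b s) = insert b (insert a s) := by
  ext x; simp only [Finset.mem_insert]; tauto

lemma Cop1_sq (μ : Fin n) (f : Finset (Fin n) → ℂ) : Cop1 μ (Cop1 μ f) = -f := by
  funext J
  simp only [Pi.neg_apply, Cop1_apply]
  by_cases h : μ ∈ J
  · rw [if_pos h, if_neg (Finset.notMem_erase _ _), csign_erase_self,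
      Finset.insert_erase h]
    linear_combination (-(f J)) * csign_mul_self μ J
  · rw [if_neg h, if_pos (Finset.mem_insert_self _ _), csign_insert_self,
      Finset.erase_insert h]
    linear_combination (-(f J)) * csign_mul_self μ J

lemma cross_factor {μ ν : Fin n} (h : μ ≠ ν) :
    (if ν < μ then (-1 : ℂ) else 1) = -(if μ < ν then (-1:ℂ) else 1) := by
  rcases lt_or_gt_of_ne h with h' | h'
  · rw [if_neg (asymm h'), if_pos h']; norm_num
  · rw [if_pos h', if_neg (asymm h')]

lemma Cop1_anticomm {μ ν : Fin n} (h : μ ≠ ν) (f : Finset (Fin n) → ℂ) :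
    Cop1 μ (Cop1 ν f) = -(Cop1 ν (Cop1 μ f)) := by
  have h' : ν ≠ μ := h.symm
  funext J
  simp only [Pi.neg_apply, Cop1_apply]
  by_cases hμ : μ ∈ J <;> by_cases hν : ν ∈ J
  · rw [if_pos hμ, if_pos hν,
      if_pos (Finset.mem_erase.2 ⟨h', hν⟩), if_pos (Finset.mem_erase.2 ⟨h, hμ⟩),
      csign_erase _ hν h', csign_erase _ hμ h, my_erase_comm,
      cross_factor h]
    ring
  · rw [if_pos hμ, if_neg hν,
      if_neg (fun hc => hν (Finset.mem_of_mem_erase hc)),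
      if_pos (Finset.mem_insert_of_mem hμ),
      csign_erase _ hμ h, csign_insert _ hν h',
      Finset.erase_insert_of_ne h', cross_factor h]
    ring
  · rw [if_neg hμ, if_pos hν,
      if_pos (Finset.mem_insert_of_mem hν),
      if_neg (fun hc => hμ (Finset.mem_of_mem_erase hc)),
      csign_insert _ hμ h, csign_erase _ hν h',
      Finset.erase_insert_of_ne h, cross_factor h]
    ring
  · rw [if_neg hμ, if_neg hν,
      if_neg (by simp [hν, h']), if_neg (by simp [hμ, h]),
      csign_insert _ hμ h, csign_insert _ hν h',
      my_insert_comm, cross_factor h]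
    ring


abbrev Fock (n : ℕ) := Finset (Fin n) → ℂ

lemma smul_cancel2 {M : Type*} [AddCommGroup M] [Module ℂ M] {x y : M}
    (h : (2:ℂ) • x = (2:ℂ) • y) : x = y := by
  have := congrArg (fun z => ((2:ℂ)⁻¹) • z) h
  simpa [smul_smul] using this

lemma Cop1_mul_self (μ : Fin n) : (Cop1 μ : Module.End ℂ (Fock n)) * Cop1 μ = -1 := by
  apply LinearMap.ext; intro f
  rw [Module.End.mul_apply, Cop1_sq]
  rfl

lemma Cop1_mul_anticomm {μ ν : Fin n} (h : μ ≠ ν) :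
    (Cop1 μ : Module.End ℂ (Fock n)) * Cop1 ν = -(Cop1 ν * Cop1 μ) := by
  apply LinearMap.ext; intro f
  rw [Module.End.mul_apply, Cop1_anticomm h]
  rfl

/-- The Clifford action of a vector on Fock space. -/
def CopV (n : ℕ) : (Fin n → ℂ) →ₗ[ℂ] Module.End ℂ (Fock n) where
  toFun v := ∑ μ, v μ • Cop1 μ
  map_add' v w := by simp [add_smul, Finset.sum_add_distrib]
  map_smul' c v := by simp [smul_smul, Finset.smul_sum]

lemma CopV_apply (v : Fin n → ℂ) : CopV n v = ∑ μ, v μ • Cop1 μ := rfl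

lemma Qf_apply (v : Fin n → ℂ) : Qf n v = -∑ μ, v μ * v μ := by
  simp [Qf, QuadraticMap.weightedSumSquares_apply]

lemma CopV_sq (v : Fin n → ℂ) :
    CopV n v * CopV n v = algebraMap ℂ (Module.End ℂ (Fock n)) (Qf n v) := by
  have expand : CopV n v * CopV n v = ∑ μ, ∑ ν, (v μ * v ν) • (Cop1 μ * Cop1 ν) := by
    rw [CopV_apply, Finset.sum_mul]
    refine Finset.sum_congr rfl fun μ _ => ?_
    rw [Finset.mul_sum]
    refine Finset.sum_congr rfl fun ν _ => ?_
    rw [smul_mul_assoc, mul_smul_comm, smul_smul]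
  have swap : CopV n v * CopV n v = ∑ μ, ∑ ν, (v μ * v ν) • (Cop1 ν * Cop1 μ) := by
    rw [expand, Finset.sum_comm]
    exact Finset.sum_congr rfl fun μ _ => Finset.sum_congr rfl fun ν _ => by
      rw [mul_comm (v μ)]
  have anti : ∀ μ ν : Fin n, (Cop1 μ * Cop1 ν : Module.End ℂ (Fock n)) + Cop1 ν * Cop1 μ
      = if μ = ν then (-2 : ℂ) • 1 else 0 := by
    intro μ ν
    by_cases h : μ = ν
    · subst h
      rw [if_pos rfl, Cop1_mul_self]
      ext f J
      simp
      ring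
    · rw [if_neg h, Cop1_mul_anticomm h, neg_add_cancel]
  apply smul_cancel2
  have lhs2 : (2:ℂ) • (CopV n v * CopV n v)
      = ∑ μ, ∑ ν, (v μ * v ν) • ((Cop1 μ * Cop1 ν : Module.End ℂ (Fock n)) + Cop1 ν * Cop1 μ) := by
    rw [two_smul]
    nth_rewrite 1 [expand]
    nth_rewrite 1 [swap]
    rw [← Finset.sum_add_distrib]
    refine Finset.sum_congr rfl fun μ _ => ?_
    rw [← Finset.sum_add_distrib]
    exact Finset.sum_congr rfl fun ν _ => by rw [smul_add]
  rw [lhs2]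
  have : ∀ μ : Fin n, (∑ ν, (v μ * v ν) • ((Cop1 μ * Cop1 ν : Module.End ℂ (Fock n)) + Cop1 ν * Cop1 μ))
      = ((v μ * v μ) * (-2)) • 1 := by
    intro μ
    have e1 : ∀ ν ∈ Finset.univ, (v μ * v ν) • ((Cop1 μ * Cop1 ν : Module.End ℂ (Fock n)) + Cop1 ν * Cop1 μ)
        = if μ = ν then ((v μ * v ν) * (-2)) • (1 : Module.End ℂ (Fock n)) else 0 := by
      intro ν _
      rw [anti μ ν]
      by_cases h : μ = ν
      · rw [if_pos h, if_pos h, smul_smul]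
      · rw [if_neg h, if_neg h, smul_zero]
    rw [Finset.sum_congr rfl e1, Finset.sum_ite_eq]
    simp
  rw [Finset.sum_congr rfl fun μ _ => this μ, ← Finset.sum_smul,
    Algebra.algebraMap_eq_smul_one, smul_smul, Qf_apply]
  congr 1
  rw [← Finset.sum_mul]
  ring

/-- The Fock representation of the Clifford algebra. -/
def rep (n : ℕ) : Cl n →ₐ[ℂ] Module.End ℂ (Fock n) :=
  CliffordAlgebra.lift (Qf n) ⟨CopV n, CopV_sq⟩

lemma rep_emb (v : Fin n → ℂ) : rep n (emb n v) = CopV n v :=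
  CliffordAlgebra.lift_ι_apply _ _ v

lemma rep_Γg (μ : Fin n) : rep n (Γg n μ) = Cop1 μ := by
  rw [Γg, rep_emb, CopV_apply]
  rw [Finset.sum_congr rfl fun ν _ => by rw [Pi.single_apply, ite_smul, one_smul, zero_smul]]
  rw [Finset.sum_ite_eq']
  simp


lemma ΓI_empty : ΓI n ∅ = 1 := by
  rw [ΓI, Finset.sort_empty]
  rfl

lemma ΓI_singleton (μ : Fin n) : ΓI n {μ} = Γg n μ := by
  rw [ΓI, Finset.sort_singleton]
  simp

lemma ΓI_insert {a : Fin n} {s : Finset (Fin n)} (h : ∀ b ∈ s, a < b) :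
    ΓI n (insert a s) = Γg n a * ΓI n s := by
  have ha : a ∉ s := fun hc => lt_irrefl a (h a hc)
  rw [ΓI, ΓI, Finset.sort_insert (r := (· ≤ ·)) (fun b hb => le_of_lt (h b hb)) ha]
  simp

lemma Γg_mul_self (μ : Fin n) : Γg n μ * Γg n μ = -1 := by
  rw [Γg, emb, CliffordAlgebra.ι_sq_scalar, Qf_apply]
  have e1 : ∀ ν ∈ Finset.univ, (Pi.single μ (1:ℂ) : Fin n → ℂ) ν * (Pi.single μ (1:ℂ) : Fin n → ℂ) ν
      = if ν = μ then (1:ℂ) else 0 := by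
    intro ν _
    simp only [Pi.single_apply]
    by_cases hc : ν = μ <;> simp [hc]
  have : (∑ ν, (Pi.single μ (1:ℂ) : Fin n → ℂ) ν * (Pi.single μ (1:ℂ) : Fin n → ℂ) ν) = 1 := by
    rw [Finset.sum_congr rfl e1, Finset.sum_ite_eq']
    simp
  rw [this]
  simp

lemma Qf_polar (v w : Fin n → ℂ) :
    QuadraticMap.polar (⇑(Qf n)) v w = -(2 * ∑ μ, v μ * w μ) := by
  rw [QuadraticMap.polar, Qf_apply, Qf_apply, Qf_apply]
  have e : (∑ μ, (v + w) μ * (v + w) μ)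
      = (∑ μ, v μ * v μ) + ((∑ μ, w μ * w μ) + 2 * ∑ μ, v μ * w μ) := by
    rw [Finset.mul_sum, ← Finset.sum_add_distrib, ← Finset.sum_add_distrib]
    refine Finset.sum_congr rfl fun μ _ => ?_
    simp only [Pi.add_apply]
    ring
  rw [e]
  ring

lemma emb_mul_add_swap (v w : Fin n → ℂ) :
    emb n v * emb n w + emb n w * emb n v = (-(2 * ∑ μ, v μ * w μ)) • (1 : Cl n) := by
  rw [emb, CliffordAlgebra.ι_mul_ι_add_swap, Qf_polar, Algebra.algebraMap_eq_smul_one]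

lemma Γg_anticomm {μ ν : Fin n} (h : μ ≠ ν) : Γg n μ * Γg n ν = -(Γg n ν * Γg n μ) := by
  have h2 := emb_mul_add_swap (n := n) (Pi.single μ 1) (Pi.single ν 1)
  have hz : (∑ i, (Pi.single μ (1:ℂ) : Fin n → ℂ) i * (Pi.single ν (1:ℂ) : Fin n → ℂ) i) = 0 := by
    have e1 : ∀ i ∈ Finset.univ, (Pi.single μ (1:ℂ) : Fin n → ℂ) i * (Pi.single ν (1:ℂ) : Fin n → ℂ) i
        = 0 := by
      intro i _
      simp only [Pi.single_apply]
      by_cases h1 : i = μ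
      · by_cases h2 : i = ν
        · exact absurd (h1.symm.trans h2) h
        · simp [h2]
      · simp [h1]
    rw [Finset.sum_congr rfl e1, Finset.sum_const_zero]
  rw [hz] at h2
  simp only [mul_zero, neg_zero, zero_smul] at h2
  exact eq_neg_of_add_eq_zero_left h2

lemma Γg_mul_ΓI_not_mem (μ : Fin n) (I : Finset (Fin n)) (hμ : μ ∉ I) :
    Γg n μ * ΓI n I = ((-1:ℂ) ^ I.card) • (ΓI n I * Γg n μ) := by
  revert hμ
  induction I using Finset.induction_on_min with
  | empty => intro _; simp [ΓI_empty]
  | insert a s ha ih =>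
    intro hμ
    have has : a ∉ s := fun hc => lt_irrefl a (ha a hc)
    have hμa : μ ≠ a := fun hc => hμ (hc ▸ Finset.mem_insert_self a s)
    have hμs : μ ∉ s := fun hc => hμ (Finset.mem_insert_of_mem hc)
    rw [ΓI_insert ha, ← mul_assoc, Γg_anticomm hμa, neg_mul, mul_assoc, ih hμs,
      mul_smul_comm, Finset.card_insert_of_notMem has, pow_succ, ← neg_smul, mul_assoc]
    congr 1
    ring

lemma neg_one_pow_sq (k : ℕ) : ((-1:ℂ) ^ k) * ((-1:ℂ) ^ k) = 1 := by
  rw [← pow_add, ← two_mul, pow_mul]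
  norm_num

lemma ΓI_mul_Γg_not_mem (μ : Fin n) (I : Finset (Fin n)) (hμ : μ ∉ I) :
    ΓI n I * Γg n μ = ((-1:ℂ) ^ I.card) • (Γg n μ * ΓI n I) := by
  rw [Γg_mul_ΓI_not_mem μ I hμ, smul_smul, neg_one_pow_sq, one_smul]

lemma Γg_conj (μ : Fin n) (I : Finset (Fin n)) :
    Γg n μ * ΓI n I * Γg n μ
      = (if μ ∈ I then ((-1:ℂ) ^ I.card) else -((-1:ℂ) ^ I.card)) • ΓI n I := by
  induction I using Finset.induction_on_min with
  | empty =>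
    rw [ΓI_empty, mul_one, Γg_mul_self]
    simp
  | insert a s ha ih =>
    have has : a ∉ s := fun hc => lt_irrefl a (ha a hc)
    rw [Finset.card_insert_of_notMem has]
    by_cases hc : μ = a
    · subst hc
      rw [if_pos (Finset.mem_insert_self _ _), ΓI_insert ha, ← mul_assoc,
        Γg_mul_self, neg_one_mul, neg_mul, ΓI_mul_Γg_not_mem μ s has, pow_succ, ← neg_smul]
      congr 1
      ring
    · have hms : μ ∈ insert a s ↔ μ ∈ s := by
        constructor
        · intro hm
          rcases Finset.mem_insert.1 hm with h1 | h1
          · exact absurd h1 hc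
          · exact h1
        · exact Finset.mem_insert_of_mem
      rw [ΓI_insert ha, ← mul_assoc, Γg_anticomm hc, neg_mul, neg_mul,
        mul_assoc (Γg n a), mul_assoc (Γg n a), ih,
        mul_smul_comm, ← neg_smul]
      congr 1
      by_cases hm : μ ∈ s
      · rw [if_pos hm, if_pos (Finset.mem_insert_of_mem hm), pow_succ]
        ring
      · rw [if_neg hm, if_neg (fun hx => hm (hms.1 hx)), pow_succ]
        ring


lemma Γg_mul_ΓI (μ : Fin n) (I : Finset (Fin n)) :
    ∃ c : ℂ, Γg n μ * ΓI n I = c • ΓI n (if μ ∈ I then I.erase μ else insert μ I) := by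
  induction I using Finset.induction_on_min with
  | empty =>
    refine ⟨1, ?_⟩
    rw [if_neg (Finset.notMem_empty μ), ΓI_empty, mul_one, one_smul]
    have : insert μ (∅ : Finset (Fin n)) = {μ} := rfl
    rw [this, ΓI_singleton]
  | insert a s ha ih =>
    have has : a ∉ s := fun hc => lt_irrefl a (ha a hc)
    by_cases hc : μ = a
    · subst hc
      refine ⟨-1, ?_⟩
      rw [if_pos (Finset.mem_insert_self _ _), Finset.erase_insert has, ΓI_insert ha,
        ← mul_assoc, Γg_mul_self, neg_one_mul, neg_smul, one_smul]
    · have hne : μ ≠ a := hc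
      rcases lt_or_gt_of_ne hne with hlt | hgt
      · refine ⟨1, ?_⟩
        have hall : ∀ b ∈ insert a s, μ < b := by
          intro b hb
          rcases Finset.mem_insert.1 hb with h1 | h1
          · rw [h1]; exact hlt
          · exact lt_trans hlt (ha b h1)
        have hmem : μ ∉ insert a s := fun hx => lt_irrefl μ (hall μ hx)
        rw [if_neg hmem, ← ΓI_insert hall, one_smul]
      · obtain ⟨c', hc'⟩ := ih
        refine ⟨-c', ?_⟩
        have hμs : μ ∈ insert a s ↔ μ ∈ s :=
          ⟨fun hm => (Finset.mem_insert.1 hm).resolve_left hne, Finset.mem_insert_of_mem⟩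
        set J' := if μ ∈ s then s.erase μ else insert μ s with hJ'
        have hallJ : ∀ b ∈ J', a < b := by
          intro b hb
          rw [hJ'] at hb
          by_cases hm : μ ∈ s
          · rw [if_pos hm] at hb
            exact ha b (Finset.mem_of_mem_erase hb)
          · rw [if_neg hm] at hb
            rcases Finset.mem_insert.1 hb with h1 | h1
            · rw [h1]; exact hgt
            · exact ha b h1
        have hins : insert a J'
            = (if μ ∈ insert a s then (insert a s).erase μ else insert μ (insert a s)) := by
          by_cases hm : μ ∈ s
          · rw [hJ', if_pos hm, if_pos (Finset.mem_insert_of_mem hm),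
              Finset.erase_insert_of_ne (fun x => hne x.symm)]
          · rw [hJ', if_neg hm, if_neg (fun hx => hm (hμs.1 hx)), my_insert_comm]
        rw [ΓI_insert ha, ← mul_assoc, Γg_anticomm hne, neg_mul, mul_assoc, hc',
          mul_smul_comm, ← ΓI_insert hallJ, hins, ← neg_smul]

lemma emb_eq_sum (v : Fin n → ℂ) : emb n v = ∑ μ, v μ • Γg n μ := by
  have hv : v = ∑ μ, v μ • (Pi.single μ (1:ℂ) : Fin n → ℂ) := by
    funext i
    rw [Finset.sum_apply]
    have e1 : ∀ μ ∈ Finset.univ, (v μ • (Pi.single μ (1:ℂ) : Fin n → ℂ)) i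
        = if i = μ then v μ else 0 := by
      intro μ _
      rw [Pi.smul_apply, Pi.single_apply]
      by_cases hc : i = μ <;> simp [hc]
    rw [Finset.sum_congr rfl e1, Finset.sum_ite_eq]
    simp
  conv_lhs => rw [hv]
  rw [map_sum]
  exact Finset.sum_congr rfl fun μ _ => by rw [map_smul]; rfl

lemma mem_span_ΓI (x : Cl n) : x ∈ Submodule.span ℂ (Set.range (ΓI n)) := by
  set S := Submodule.span ℂ (Set.range (ΓI n)) with hS
  have hΓI : ∀ I, ΓI n I ∈ S := fun I => Submodule.subset_span ⟨I, rfl⟩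
  have hmulΓ : ∀ μ : Fin n, ∀ z ∈ S, Γg n μ * z ∈ S := by
    intro μ z hz
    refine Submodule.span_induction ?_ ?_ ?_ ?_ hz
    · rintro _ ⟨I, rfl⟩
      obtain ⟨c, hc⟩ := Γg_mul_ΓI μ I
      rw [hc]
      exact Submodule.smul_mem _ _ (hΓI _)
    · rw [mul_zero]; exact Submodule.zero_mem _
    · intro y z' _ _ hy hz'
      rw [mul_add]; exact Submodule.add_mem _ hy hz'
    · intro c y _ hy
      rw [mul_smul_comm]; exact Submodule.smul_mem _ _ hy
  have hmulΓI : ∀ I : Finset (Fin n), ∀ z ∈ S, ΓI n I * z ∈ S := by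
    intro I
    induction I using Finset.induction_on_min with
    | empty => intro z hz; rw [ΓI_empty, one_mul]; exact hz
    | insert a s ha ih =>
      intro z hz
      rw [ΓI_insert ha, mul_assoc]
      exact hmulΓ a _ (ih z hz)
  induction x using CliffordAlgebra.induction with
  | algebraMap r =>
    rw [Algebra.algebraMap_eq_smul_one, ← ΓI_empty]
    exact Submodule.smul_mem _ _ (hΓI ∅)
  | ι v =>
    have hv : CliffordAlgebra.ι (Qf n) v = emb n v := rfl
    rw [hv, emb_eq_sum]
    refine Submodule.sum_mem _ fun μ _ => Submodule.smul_mem _ _ ?_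
    rw [← ΓI_singleton]
    exact hΓI _
  | mul x y hx hy =>
    refine Submodule.span_induction ?_ ?_ ?_ ?_ hx
    · rintro _ ⟨I, rfl⟩
      exact hmulΓI I y hy
    · rw [zero_mul]; exact Submodule.zero_mem _
    · intro p q _ _ hp hq
      rw [add_mul]; exact Submodule.add_mem _ hp hq
    · intro c p _ hp
      rw [smul_mul_assoc]; exact Submodule.smul_mem _ _ hp
  | add x y hx hy => exact Submodule.add_mem _ hx hy

lemma csign_none (a : Fin n) (J : Finset (Fin n)) (h : ∀ b ∈ J, ¬ b < a) : csign a J = 1 := by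
  unfold csign
  rw [Finset.filter_false_of_mem h, Finset.card_empty, pow_zero]

lemma rep_ΓI_vacuum (I : Finset (Fin n)) :
    rep n (ΓI n I) (Pi.single ∅ (1:ℂ) : Fock n) = (Pi.single I (1:ℂ) : Fock n) := by
  induction I using Finset.induction_on_min with
  | empty => rw [ΓI_empty, map_one]; rfl
  | insert a s ha ih =>
    have has : a ∉ s := fun hc => lt_irrefl a (ha a hc)
    rw [ΓI_insert ha, map_mul, Module.End.mul_apply, ih, rep_Γg]
    funext J
    rw [Cop1_apply]
    by_cases hJ : a ∈ J
    · rw [if_pos hJ]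
      by_cases hJe : J = insert a s
      · subst hJe
        rw [Finset.erase_insert has, Pi.single_eq_same, Pi.single_eq_same,
          csign_none a _ (by
            intro b hb
            rcases Finset.mem_insert.1 hb with h1 | h1
            · rw [h1]; exact lt_irrefl a
            · exact asymm (ha b h1)), mul_one]
      · have h1 : J.erase a ≠ s := by
          intro hx
          exact hJe (by rw [← hx, Finset.insert_erase hJ])
        rw [Pi.single_eq_of_ne h1, Pi.single_eq_of_ne hJe, mul_zero]
    · rw [if_neg hJ]
      have h1 : insert a J ≠ s := by
        intro hx
        exact has (hx ▸ Finset.mem_insert_self a J)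
      have h2 : J ≠ insert a s := by
        intro hx
        exact hJ (hx ▸ Finset.mem_insert_self a s)
      rw [Pi.single_eq_of_ne h1, Pi.single_eq_of_ne h2, mul_zero, neg_zero]

/-- Coefficient extraction: the matrix coefficients of `x` on the vacuum vector. -/
def coeffm (n : ℕ) : Cl n →ₗ[ℂ] Fock n :=
  (LinearMap.applyₗ ((Pi.single ∅ (1:ℂ)) : Fock n)).comp (rep n).toLinearMap

lemma coeffm_ΓI (I : Finset (Fin n)) : coeffm n (ΓI n I) = Pi.single I (1:ℂ) :=
  rep_ΓI_vacuum I

lemma coeffm_sum (c : Finset (Fin n) → ℂ) : coeffm n (∑ I, c I • ΓI n I) = c := by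
  rw [map_sum]
  have e1 : ∀ I ∈ Finset.univ, coeffm n (c I • ΓI n I) = Pi.single I (c I) := by
    intro I _
    rw [map_smul, coeffm_ΓI, ← Pi.single_smul, smul_eq_mul, mul_one]
  rw [Finset.sum_congr rfl e1, Finset.univ_sum_single]


lemma hΓω (hn : 1 ≤ n) (μ : Fin n) : Γg n μ * ΓI n Finset.univ
    = ((-1:ℂ)^(n+1)) • (ΓI n Finset.univ * Γg n μ) := by
  have h1 := Γg_conj μ Finset.univ
  rw [if_pos (Finset.mem_univ μ), Finset.card_univ, Fintype.card_fin] at h1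
  have h2 := congrArg (fun z => z * Γg n μ) h1
  rw [mul_assoc (Γg n μ * ΓI n Finset.univ), Γg_mul_self, mul_neg_one, smul_mul_assoc] at h2
  have h3 : Γg n μ * ΓI n Finset.univ = -(((-1:ℂ)^n) • (ΓI n Finset.univ * Γg n μ)) := by
    rw [← h2, neg_neg]
  rw [h3, ← neg_smul]
  match_scalars
  ring

lemma hembω (hn : 1 ≤ n) (u : Fin n → ℂ) : emb n u * ΓI n Finset.univ
    = ((-1:ℂ)^(n+1)) • (ΓI n Finset.univ * emb n u) := by
  rw [emb_eq_sum, Finset.sum_mul, Finset.mul_sum, Finset.smul_sum]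
  refine Finset.sum_congr rfl fun μ _ => ?_
  rw [smul_mul_assoc, mul_smul_comm, hΓω hn μ, smul_smul, smul_smul, mul_comm (u μ)]

lemma hωemb (hn : 1 ≤ n) (u : Fin n → ℂ) : ΓI n Finset.univ * emb n u
    = ((-1:ℂ)^(n+1)) • (emb n u * ΓI n Finset.univ) := by
  rw [hembω hn u, smul_smul, neg_one_pow_sq, one_smul]

end Stmt12

open Stmt12 in
/-- `ι(v)·b·ι(w) + ι(w)·b·ι(v) = 2⟨v,w⟩·a` for all `v, w` iff `b` is a
scalar plus a multiple of the volume monomial and `a` is determined by `b`. -/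
theorem stmt_12 (n : ℕ) (hn : 1 ≤ n) (a b : Cl n) :
    (∀ v w : Fin n → ℂ,
        emb n v * b * emb n w + emb n w * b * emb n v =
          (2 * ∑ μ : Fin n, v μ * w μ) • a) ↔
    (∃ α γ : ℂ,
        b = algebraMap ℂ (Cl n) α + γ • ΓI n Finset.univ ∧
        a = -(algebraMap ℂ (Cl n) α) + ((-1 : ℂ) ^ n * γ) • ΓI n Finset.univ) := by
  constructor
  · intro H
    have hA : ∀ μ : Fin n, Γg n μ * b * Γg n μ = a := by
      intro μ
      have h1 := H (Pi.single μ 1) (Pi.single μ 1)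
      have hs : (∑ i, (Pi.single μ (1:ℂ) : Fin n → ℂ) i * (Pi.single μ (1:ℂ) : Fin n → ℂ) i) = 1 := by
        have e1 : ∀ i ∈ Finset.univ, (Pi.single μ (1:ℂ) : Fin n → ℂ) i * (Pi.single μ (1:ℂ) : Fin n → ℂ) i
            = if i = μ then (1:ℂ) else 0 := by
          intro i _
          simp only [Pi.single_apply]
          by_cases hc : i = μ <;> simp [hc]
        rw [Finset.sum_congr rfl e1, Finset.sum_ite_eq']
        simp
      rw [hs, mul_one] at h1
      apply smul_cancel2
      rw [two_smul]
      exact h1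
    obtain ⟨c, hc⟩ := (Submodule.mem_span_range_iff_exists_fun ℂ).1 (mem_span_ΓI b)
    have hconj : ∀ μ : Fin n, Γg n μ * b * Γg n μ
        = ∑ I, ((if μ ∈ I then ((-1:ℂ)^I.card) else -((-1:ℂ)^I.card)) * c I) • ΓI n I := by
      intro μ
      rw [← hc, Finset.mul_sum, Finset.sum_mul]
      refine Finset.sum_congr rfl fun I _ => ?_
      rw [mul_smul_comm, smul_mul_assoc, Γg_conj, smul_smul, mul_comm (c I)]
    have hcoef : ∀ μ : Fin n,
        (fun I => (if μ ∈ I then ((-1:ℂ)^I.card) else -((-1:ℂ)^I.card)) * c I) = coeffm n a := by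
      intro μ
      rw [← hA μ, hconj μ, coeffm_sum]
    have hvanish : ∀ I : Finset (Fin n), I ≠ ∅ → I ≠ Finset.univ → c I = 0 := by
      intro I hne hnu
      obtain ⟨μ, hμ⟩ := Finset.nonempty_iff_ne_empty.2 hne
      obtain ⟨ν, hν⟩ : ∃ ν, ν ∉ I := by
        by_contra hcon
        push_neg at hcon
        exact hnu (Finset.eq_univ_iff_forall.2 hcon)
      have h1 := congrFun ((hcoef μ).trans (hcoef ν).symm) I
      rw [if_pos hμ, if_neg hν] at h1
      have h3 : ((2:ℂ) * (-1:ℂ)^I.card) * c I = 0 := by linear_combination h1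
      rcases mul_eq_zero.1 h3 with h4 | h4
      · exfalso
        have : ((2:ℂ) * (-1:ℂ)^I.card) ≠ 0 := by
          apply mul_ne_zero
          · norm_num
          · apply pow_ne_zero; norm_num
        exact this h4
      · exact h4
    have hne_univ : (∅ : Finset (Fin n)) ≠ Finset.univ := by
      intro h
      have : (⟨0, hn⟩ : Fin n) ∈ (∅ : Finset (Fin n)) := h ▸ Finset.mem_univ _
      exact absurd this (Finset.notMem_empty _)
    have hpair : b = c ∅ • ΓI n ∅ + c Finset.univ • ΓI n Finset.univ := by
      rw [← hc]
      have hzero : ∀ I ∈ (Finset.univ : Finset (Finset (Fin n))),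
          I ∉ ({∅, Finset.univ} : Finset (Finset (Fin n))) → c I • ΓI n I = 0 := by
        intro I _ hI
        simp only [Finset.mem_insert, Finset.mem_singleton] at hI
        push_neg at hI
        rw [hvanish I hI.1.ne_empty hI.2, zero_smul]
      rw [← Finset.sum_subset (Finset.subset_univ _) hzero, Finset.sum_pair hne_univ]
    refine ⟨c ∅, c Finset.univ, ?_, ?_⟩
    · rw [hpair, ΓI_empty, Algebra.algebraMap_eq_smul_one]
    · rw [← hA ⟨0, hn⟩, hpair]
      have e0 : Γg n ⟨0, hn⟩ * (c ∅ • ΓI n ∅ + c Finset.univ • ΓI n Finset.univ) * Γg n ⟨0, hn⟩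
          = c ∅ • (Γg n ⟨0, hn⟩ * ΓI n ∅ * Γg n ⟨0, hn⟩)
            + c Finset.univ • (Γg n ⟨0, hn⟩ * ΓI n Finset.univ * Γg n ⟨0, hn⟩) := by
        rw [mul_add, add_mul, mul_smul_comm, mul_smul_comm, smul_mul_assoc, smul_mul_assoc]
      rw [e0, Γg_conj, Γg_conj, if_neg (Finset.notMem_empty _), if_pos (Finset.mem_univ _),
        Finset.card_empty, Finset.card_univ, Fintype.card_fin, ΓI_empty,
        Algebra.algebraMap_eq_smul_one]
      match_scalars <;> ring
  · rintro ⟨α, γ, hb, ha⟩ v w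
    have hmid : ∀ x y : Fin n → ℂ, emb n x * ΓI n Finset.univ * emb n y
        = ((-1:ℂ)^(n+1)) • (emb n x * emb n y * ΓI n Finset.univ) := by
      intro x y
      rw [mul_assoc, hωemb hn y, mul_smul_comm, ← mul_assoc]
    have hXY := emb_mul_add_swap v w
    have hY : emb n w * emb n v
        = (-(2 * ∑ μ, v μ * w μ)) • (1 : Cl n) - emb n v * emb n w := by
      rw [← hXY]
      abel
    rw [hb, ha]
    simp only [mul_add, add_mul, Algebra.algebraMap_eq_smul_one, mul_smul_comm,
      smul_mul_assoc, mul_one, one_mul]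
    rw [hmid v w, hmid w v, hY]
    simp only [sub_mul, smul_mul_assoc, one_mul, smul_sub, smul_add, smul_smul]
    match_scalars <;> ring
end
end

section
/- Let B ∈ M_n(ℂ) and c, d, e ∈ Cℓ. Let ĉ := involute(c) denote the image of c under the grade involution of Cℓ (the algebra automorphism induced by ι(v) ↦ −ι(v)). In the algebra of 2×2 matrices over Cℓ define N := [[ĉ, √2·e],[0, d]], and for v ∈ ℂⁿ define W(v) := [[0, −(1/√2)·s_{ĉ,d}(ι(v))],[0, 0]] and P(v) := [[0, (1/√2)·ι(B·v)],[0, 0]]. Then the following are equivalent: (1) for all v, w ∈ ℂⁿ: P(v)P(w) − P(w)P(v) = 0, P(v)W(w) − W(w)P(v) = 0, W(v)W(w) − W(w)W(v) = 0, P(v)N − N·P(v) = W(B·v), and N·W(w) − W(w)·N = P(w); (2) q_{ĉ,d}(ι(v)) = −ι(B·v) for all v ∈ ℂⁿ. (These commutation relations are exactly the bracket relations of the Cahen–Wallach Lie algebra defined by B under the simple Clifford map with ρ(e₊) = 0; thus such a map is a Clifford representation, i.e. the corresponding invariant spinor connection is flat, precisely when (ĉ, d) is a quadratic Clifford pair associated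 to −B.) -/
noncomputable section

lemma nilp {n : ℕ} (p q : Cl n) :
    (!![0, p; 0, 0] : Matrix (Fin 2) (Fin 2) (Cl n)) * !![0, q; 0, 0] = 0 := by
  ext i j
  fin_cases i <;> fin_cases j <;>
    simp [Matrix.mul_apply, Fin.sum_univ_two]

lemma commL {n : ℕ} (a b u p : Cl n) :
    (!![a, u; 0, b] : Matrix (Fin 2) (Fin 2) (Cl n)) * !![0, p; 0, 0]
      - !![0, p; 0, 0] * !![a, u; 0, b] = !![0, a * p - p * b; 0, 0] := by
  ext i j
  fin_cases i <;> fin_cases j <;>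
    simp [Matrix.mul_apply, Fin.sum_univ_two]

lemma commR {n : ℕ} (a b u p : Cl n) :
    (!![0, p; 0, 0] : Matrix (Fin 2) (Fin 2) (Cl n)) * !![a, u; 0, b]
      - !![a, u; 0, b] * !![0, p; 0, 0] = !![0, p * b - a * p; 0, 0] := by
  ext i j
  fin_cases i <;> fin_cases j <;>
    simp [Matrix.mul_apply, Fin.sum_univ_two]

lemma key {n : ℕ} (a b x : Cl n) : a * sp a b x - sp a b x * b = qp a b x := by
  simp only [sp, qp]; noncomm_ring

lemma sqrt2C_ne : (Real.sqrt 2 : ℂ) ≠ 0 :=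
  Complex.ofReal_ne_zero.mpr (by positivity)

lemma scal {n : ℕ} (a b x y : Cl n) :
    a * (-(1 / (Real.sqrt 2 : ℂ)) • sp a b x) - (-(1 / (Real.sqrt 2 : ℂ)) • sp a b x) * b
      = (1 / (Real.sqrt 2 : ℂ)) • y ↔ qp a b x = -y := by
  rw [mul_smul_comm, smul_mul_assoc, ← smul_sub, key, neg_smul, ← smul_neg]
  constructor
  · intro h
    have h2 := smul_right_injective (Cl n) (one_div_ne_zero sqrt2C_ne) h
    exact neg_eq_iff_eq_neg.mp h2
  · intro h
    rw [h, neg_neg]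

/-- the bracket relations of the Cahen–Wallach Lie algebra hold for the
simple Clifford map with `ρ(e₊) = 0` precisely when `(ĉ, d)` is a quadratic Clifford
pair associated to `−B`. -/
theorem stmt_13 (n : ℕ) (hn : 1 ≤ n) (B : Matrix (Fin n) (Fin n) ℂ) (c d e : Cl n)
    (chat : Cl n) (hchat : chat = CliffordAlgebra.involute c)
    (N : Matrix (Fin 2) (Fin 2) (Cl n))
    (hN : N = !![chat, (Real.sqrt 2 : ℂ) • e; 0, d])
    (W : (Fin n → ℂ) → Matrix (Fin 2) (Fin 2) (Cl n))
    (hW : ∀ v : Fin n → ℂ,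
      W v = !![0, -(1 / (Real.sqrt 2 : ℂ)) • sp chat d (emb n v); 0, 0])
    (P : (Fin n → ℂ) → Matrix (Fin 2) (Fin 2) (Cl n))
    (hP : ∀ v : Fin n → ℂ,
      P v = !![0, (1 / (Real.sqrt 2 : ℂ)) • emb n (B.mulVec v); 0, 0]) :
    (∀ v w : Fin n → ℂ,
        P v * P w - P w * P v = 0 ∧
        P v * W w - W w * P v = 0 ∧
        W v * W w - W w * W v = 0 ∧
        P v * N - N * P v = W (B.mulVec v) ∧
        N * W w - W w * N = P w) ↔
    (∀ v : Fin n → ℂ, qp chat d (emb n v) = -emb n (B.mulVec v)) := by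
  constructor
  · intro h v
    have h5 := (h v v).2.2.2.2
    rw [hN, hW, hP, commL] at h5
    have h01 := congrFun (congrFun h5 0) 1
    simp only [Matrix.of_apply, Matrix.cons_val', Matrix.cons_val_one, Matrix.head_cons,
      Matrix.empty_val', Matrix.cons_val_fin_one, Matrix.cons_val_zero,
      Matrix.head_fin_const] at h01
    exact (scal chat d (emb n v) (emb n (B.mulVec v))).mp h01
  · intro h v w
    refine ⟨?_, ?_, ?_, ?_, ?_⟩
    · rw [hP v, hP w, nilp, nilp, sub_zero]
    · rw [hP v, hW w, nilp, nilp, sub_zero]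
    · rw [hW v, hW w, nilp, nilp, sub_zero]
    · have hkey : ((1 / (Real.sqrt 2 : ℂ)) • emb n (B.mulVec v)) * d
          - chat * ((1 / (Real.sqrt 2 : ℂ)) • emb n (B.mulVec v))
          = -(1 / (Real.sqrt 2 : ℂ)) • sp chat d (emb n (B.mulVec v)) := by
        simp only [sp, smul_mul_assoc, mul_smul_comm, neg_smul, smul_sub]
        abel
      rw [hP v, hN, commR, hkey, hW]
    · rw [hN, hW w, hP w, commL,
        (scal chat d (emb n w) (emb n (B.mulVec w))).mpr (h w)]
end
end

section
/- Let I ⊆ {1,…,n} with |I| = k, let γ, δ ∈ ℂ, and set c := γ·Γ_I, d := δ·Γ_I. Then for all μ, ν ∈ {1,…,n} with μ ≠ ν: if μ ∈ I and ν ∈ I then Ω_{c,d}(e_μ, e_ν) = 2·((−1)^k·γ + δ)·Γ_IΓ_μΓ_ν; if μ ∉ I and ν ∉ I then Ω_{c,d}(e_μ, e_ν) = 2·(δ − (−1)^k·γ)·Γ_IΓ_μΓ_ν; and if exactly one of μ, ν lies in I then Ω_{c,d}(e_μ, e_ν) = 0. Moreover Ω_{c,d}(e_μ, e_μ) = 0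 for every μ. (Evaluation of the tensor Ω on monomial pairs.) -/
noncomputable section

/-- `Ω_{c,d}(v,w) = s_{d,c}(ι(v))·ι(w) + ι(w)·s_{c,d}(ι(v))`. -/
def Ω {n : ℕ} (c d : Cl n) (v w : Fin n → ℂ) : Cl n :=
  sp d c (emb n v) * emb n w + emb n w * sp c d (emb n v)

/-! ### Auxiliary lemmas -/

lemma Qf_single (n : ℕ) (μ : Fin n) : Qf n (Pi.single μ 1) = -1 := by
  simp [Qf, QuadraticMap.weightedSumSquares_apply, Pi.single_apply]

lemma Gsq (n : ℕ) (μ : Fin n) : Γg n μ * Γg n μ = -1 := by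
  rw [Γg, emb, CliffordAlgebra.ι_sq_scalar, Qf_single, map_neg, map_one]

lemma Ganti (n : ℕ) (μ ν : Fin n) (h : μ ≠ ν) : Γg n μ * Γg n ν = -(Γg n ν * Γg n μ) := by
  have h2 := CliffordAlgebra.ι_mul_ι_add_swap (Q := Qf n) (Pi.single μ 1) (Pi.single ν 1)
  have hp : QuadraticMap.polar (Qf n) (Pi.single μ 1) (Pi.single ν 1) = 0 := by
    simp only [QuadraticMap.polar, Qf, QuadraticMap.weightedSumSquares_apply, Pi.add_apply,
      Pi.single_apply, ← Finset.sum_sub_distrib]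
    apply Finset.sum_eq_zero
    intro i _
    by_cases h1 : i = μ <;> by_cases h2 : i = ν <;> simp_all
  rw [hp, map_zero] at h2
  exact eq_neg_of_add_eq_zero_left h2

lemma comm_list (n : ℕ) (μ : Fin n) (L : List (Fin n)) :
    Γg n μ * (L.map (Γg n)).prod =
      ((-1:ℂ) ^ (L.countP (fun a => a ≠ μ))) • ((L.map (Γg n)).prod * Γg n μ) := by
  induction L with
  | nil => simp
  | cons a L ih =>
    simp only [List.map_cons, List.prod_cons]
    by_cases h : a = μ
    · subst h
      rw [List.countP_cons_of_neg (by simp)]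
      conv_lhs => rw [← mul_assoc, mul_assoc, ih]
      rw [mul_smul_comm, mul_assoc]
    · rw [List.countP_cons_of_pos (by simp [h]),
        ← mul_assoc, Ganti n μ a (fun he => h he.symm), neg_mul, mul_assoc, ih, pow_succ,
        mul_smul_comm, mul_assoc (Γg n a)]
      module

lemma countP_ne {n : ℕ} (l : List (Fin n)) (μ : Fin n) :
    l.countP (fun a => a ≠ μ) + l.count μ = l.length := by
  induction l with
  | nil => simp
  | cons a l ih =>
    rw [List.length_cons]
    by_cases h : a = μ
    · subst h
      rw [List.countP_cons_of_neg (by simp), List.count_cons_self]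
      omega
    · rw [List.countP_cons_of_pos (by simp [h]), List.count_cons_of_ne h]
      omega

lemma comm_ΓI (n : ℕ) (μ : Fin n) (I : Finset (Fin n)) :
    Γg n μ * ΓI n I =
      ((-1:ℂ) ^ (if μ ∈ I then I.card - 1 else I.card)) • (ΓI n I * Γg n μ) := by
  rw [ΓI, comm_list]
  congr 2
  have hlen : (I.sort (· ≤ ·)).length = I.card := Finset.length_sort _
  have key := countP_ne (I.sort (· ≤ ·)) μ
  by_cases h : μ ∈ I
  · have hmem : μ ∈ I.sort (· ≤ ·) := (Finset.mem_sort _).2 h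
    have hnd : (I.sort (· ≤ ·)).Nodup := I.sort_nodup _
    have hcount : (I.sort (· ≤ ·)).count μ = 1 := List.count_eq_one_of_mem hnd hmem
    simp only [h, if_true]
    omega
  · have hcount : (I.sort (· ≤ ·)).count μ = 0 := by
      rw [List.count_eq_zero]
      exact fun hm => h ((Finset.mem_sort _).1 hm)
    simp only [h, if_false]
    omega

lemma key_calc {n : ℕ} (G gμ gν : Cl n) (εμ εν γ δ : ℂ)
    (hμ : gμ * G = εμ • (G * gμ)) (hν : gν * G = εν • (G * gν))
    (hanti : gν * gμ = -(gμ * gν)) :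
    ((δ • G) * gμ - gμ * (γ • G)) * gν + gν * ((γ • G) * gμ - gμ * (δ • G)) =
      ((δ - γ * εμ) - εν * (γ - δ * εμ)) • (G * gμ * gν) := by
  simp only [smul_mul_assoc, mul_smul_comm, sub_mul, mul_sub, ← mul_assoc]
  rw [hμ, hν, hanti, neg_mul, mul_assoc gμ gν G, hν, mul_smul_comm, ← mul_assoc gμ G gν, hμ]
  simp only [smul_mul_assoc, mul_smul_comm, ← mul_assoc]
  rw [mul_assoc G gν gμ, hanti]
  simp only [mul_neg, smul_neg, ← mul_assoc]
  match_scalars <;> ring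

lemma key_sq {n : ℕ} (c d gμ : Cl n) (hsq : gμ * gμ = -1) :
    (d * gμ - gμ * c) * gμ + gμ * (c * gμ - gμ * d) = 0 := by
  have h : (d * gμ - gμ * c) * gμ + gμ * (c * gμ - gμ * d)
      = d * (gμ * gμ) - gμ * c * gμ + gμ * c * gμ - gμ * gμ * d := by noncomm_ring
  rw [h, hsq]
  noncomm_ring

/-- evaluation of the tensor `Ω` on monomial pairs. -/
theorem stmt_14 (n : ℕ) (hn : 1 ≤ n) (I : Finset (Fin n)) (k : ℕ) (hk : I.card = k)
    (γ δ : ℂ) (c d : Cl n) (hc : c = γ • ΓI n I) (hd : d = δ • ΓI n I) :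
    (∀ μ ν : Fin n, μ ≠ ν →
      (μ ∈ I → ν ∈ I →
        Ω c d (Pi.single μ 1) (Pi.single ν 1) =
          (2 * ((-1 : ℂ) ^ k * γ + δ)) • (ΓI n I * Γg n μ * Γg n ν)) ∧
      (μ ∉ I → ν ∉ I →
        Ω c d (Pi.single μ 1) (Pi.single ν 1) =
          (2 * (δ - (-1 : ℂ) ^ k * γ)) • (ΓI n I * Γg n μ * Γg n ν)) ∧
      ((μ ∈ I ∧ ν ∉ I) ∨ (μ ∉ I ∧ ν ∈ I) →
        Ω c d (Pi.single μ 1) (Pi.single ν 1) = 0)) ∧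
    (∀ μ : Fin n, Ω c d (Pi.single μ 1) (Pi.single μ 1) = 0) := by
  subst hk
  have hΩ : ∀ μ ν : Fin n, Ω c d (Pi.single μ 1) (Pi.single ν 1)
      = (d * Γg n μ - Γg n μ * c) * Γg n ν + Γg n ν * (c * Γg n μ - Γg n μ * d) := by
    intro μ ν; rfl
  have hs2 : ((-1:ℂ) ^ I.card) * ((-1:ℂ) ^ I.card) = 1 := by
    rw [← pow_add, ← two_mul, pow_mul]
    norm_num
  have hmain : ∀ μ ν : Fin n, μ ≠ ν →
      Ω c d (Pi.single μ 1) (Pi.single ν 1) =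
        ((δ - γ * ((-1:ℂ) ^ (if μ ∈ I then I.card - 1 else I.card)))
          - ((-1:ℂ) ^ (if ν ∈ I then I.card - 1 else I.card))
            * (γ - δ * ((-1:ℂ) ^ (if μ ∈ I then I.card - 1 else I.card))))
          • (ΓI n I * Γg n μ * Γg n ν) := by
    intro μ ν hμν
    rw [hΩ, hc, hd]
    exact key_calc (ΓI n I) (Γg n μ) (Γg n ν) _ _ γ δ
      (comm_ΓI n μ I) (comm_ΓI n ν I) (Ganti n ν μ (Ne.symm hμν))
  have hpred : ∀ μ : Fin n, μ ∈ I → (-1:ℂ) ^ (I.card - 1) = -((-1:ℂ) ^ I.card) := by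
    intro μ hμ
    have h1 : 1 ≤ I.card := Finset.card_pos.2 ⟨μ, hμ⟩
    have h2 : I.card - 1 + 1 = I.card := Nat.succ_pred_eq_of_pos h1
    conv_rhs => rw [← h2]
    rw [pow_succ]
    ring
  constructor
  · intro μ ν hμν
    refine ⟨?_, ?_, ?_⟩
    · intro hμ hν
      rw [hmain μ ν hμν]
      simp only [hμ, hν, if_true]
      rw [hpred μ hμ]
      congr 1
      linear_combination δ * hs2
    · intro hμ hν
      rw [hmain μ ν hμν]
      simp only [hμ, hν, if_false]
      congr 1
      linear_combination δ * hs2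
    · rintro (⟨hμ, hν⟩ | ⟨hμ, hν⟩)
      · rw [hmain μ ν hμν]
        simp only [hμ, hν, if_true, if_false]
        rw [hpred μ hμ]
        have : (δ - γ * -((-1:ℂ) ^ I.card)) - ((-1:ℂ) ^ I.card)
            * (γ - δ * -((-1:ℂ) ^ I.card)) = 0 := by linear_combination -δ * hs2
        rw [this, zero_smul]
      · rw [hmain μ ν hμν]
        simp only [hμ, hν, if_true, if_false]
        rw [hpred ν hν]
        have : (δ - γ * ((-1:ℂ) ^ I.card)) - (-((-1:ℂ) ^ I.card))
            * (γ - δ * ((-1:ℂ) ^ I.card)) = 0 := by linear_combination -δ * hs2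
        rw [this, zero_smul]
  · intro μ
    rw [hΩ]
    exact key_sq c d (Γg n μ) (Gsq n μ)
end
end
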